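/- Let {a_ξ : ξ < ω_1} be a tower on ω generating an ideal I (together with finite sets). Then there exist sets b_α ⊆ a_α for α < ω_1 such that b_β ∩ a_α =_* b_α whenever α < β, but there is no b ⊆ ω with b ∩ a_α =_* b_α for all α < ω_1. Consequently, taking G_n = ℤ_2 for all n, lim^1 G_I ≠ 0 (a Hausdorff-gap-type nontrivial coherent family exists in ZFC). -/

import Mathlib

/-- The index set `ω₁`: ordinals below `ω₁ = (ℵ₁).ord`. -/
def Omega1 : Type 1 := ↥(Set.Iio (Cardinal.aleph 1).ord)

noncomputable instance : LinearOrder Omega1 :=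
  inferInstanceAs (LinearOrder ↥(Set.Iio (Cardinal.aleph 1).ord))

/-!
Hausdorff's construction. By transfinite recursion choose `b α ⊆ a α` coherent with all earlier
`b ξ` and satisfying Hausdorff's condition: for every `n`, only finitely many `ξ < α` have
`(b ξ ∩ a α) \ b α ⊆ [0, n)`. At stage `α` take a cofinal sequence `γ k` below `α` and let `b α`
be an infinite set almost disjoint from every earlier `a ξ`, together with
`(⋃ₖ b (γ k) \ [0, m k)) ∩ a α`, where the cutoffs `m k` grow fast enough to make the union
coherent and to leave, for each of the finitely many dangerous `ξ ≤ γ k`, a point of `b ξ` outside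
`b α`. If some `c` trivialized the family, the bound `N α` on `(c ∩ a α) ∆ b α` would take one
value `n` on an uncountable set of `α`, and an `α` with infinitely many such predecessors would
violate Hausdorff's condition for `n`.
-/

open Set

namespace Omega1

instance : WellFoundedLT Omega1 :=
  inferInstanceAs (WellFoundedLT ↥(Iio (Cardinal.aleph 1).ord))

instance : Uncountable Omega1 := by
  rw [← Cardinal.aleph0_lt_mk_iff]
  change Cardinal.aleph0 < Cardinal.mk (Iio (Cardinal.aleph 1).ord)
  simp

theorem countable_Iio (α : Omega1) : (Iio α).Countable := by
  have : (Iio (Subtype.val α : Ordinal)).Countable := by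
    rw [← Cardinal.le_aleph0_iff_set_countable, Cardinal.mk_Iio_ordinal, Cardinal.lift_le_aleph0,
      ← Order.lt_succ_iff, Cardinal.succ_aleph0, ← Cardinal.lt_ord]
    exact α.2
  exact this.preimage Subtype.val_injective

end Omega1

theorem Set.Finite.exists_subset_Iio {α : Type*} [Preorder α] [IsDirectedOrder α] [Nonempty α]
    [NoMaxOrder α] {s : Set α} (hs : s.Finite) : ∃ N, s ⊆ Iio N := by
  obtain ⟨M, hM⟩ := hs.bddAbove
  obtain ⟨N, hN⟩ := exists_gt M
  exact ⟨N, fun x hx => (hM hx).trans_lt hN⟩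

theorem Set.Infinite.diff_biUnion {X ι : Type*} {e : Set X} {a : ι → Set X} {F : Set ι}
    (he : e.Infinite) (hF : F.Finite) (hea : ∀ η ∈ F, (e ∩ a η).Finite) :
    (e \ ⋃ η ∈ F, a η).Infinite := by
  refine (he.sdiff (hF.biUnion hea)).mono ?_
  rintro x ⟨hxe, hx⟩
  refine ⟨hxe, fun hxF => hx ?_⟩
  obtain ⟨η, hη, hxη⟩ := mem_iUnion₂.mp hxF
  exact mem_biUnion hη ⟨hxe, hxη⟩

theorem Set.Countable.of_finite_inter_Iio {ι : Type*} [LinearOrder ι] {S : Set ι}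
    (h : ∀ α ∈ S, (S ∩ Iio α).Finite) : S.Countable :=
  countable_iff_exists_injOn.mpr ⟨fun α => (S ∩ Iio α).ncard, StrictMonoOn.injOn
    fun x hx y hy hxy => ncard_lt_ncard
      ⟨inter_subset_inter_right _ (Iio_subset_Iio hxy.le),
        fun hsub => lt_irrefl x (hsub ⟨hx, hxy⟩).2⟩ (h y hy)⟩

theorem exists_monotone_cofinal_of_countable_Iio {ι : Type*} [LinearOrder ι] {α : ι}
    (hc : (Iio α).Countable) (hne : (Iio α).Nonempty) :
    ∃ γ : ℕ → ι, Monotone γ ∧ (∀ k, γ k < α) ∧ ∀ ξ < α, ∃ k, ξ ≤ γ k := by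
  have : Countable (Iio α) := hc.to_subtype
  have : Nonempty (Iio α) := hne.to_subtype
  have : (Filter.atTop : Filter (Iio α)).IsCountablyGenerated :=
    Filter.atTop_countable_basis.isCountablyGenerated
  obtain ⟨γ, hγ, htends⟩ := Filter.exists_seq_monotone_tendsto_atTop_atTop (Iio α)
  refine ⟨fun k => γ k, fun i j hij => hγ hij, fun k => (γ k).2, fun ξ hξ => ?_⟩
  exact (htends.eventually (Filter.eventually_ge_atTop ⟨ξ, hξ⟩)).exists

theorem WellFoundedLT.exists_forall_of_step {ι X : Type*} [LT ι] [WellFoundedLT ι] [Nonempty X]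
    (P : (ι → X) → ι → X → Prop)
    (hP : ∀ f g α x, (∀ β < α, f β = g β) → P f α x → P g α x)
    (step : ∀ f α, (∀ β < α, P f β (f β)) → ∃ x, P f α x) :
    ∃ f : ι → X, ∀ α, P f α (f α) := by
  let F : ι → X := wellFounded_lt.fix fun α ih =>
    Classical.epsilon fun x => ∃ g : ι → X, (∀ β (h : β < α), g β = ih β h) ∧ P g α x
  refine ⟨F, fun α => wellFounded_lt.induction (C := fun α => P F α (F α)) α fun α ih => ?_⟩
  have hF : F α = Classical.epsilon fun x => ∃ g : ι → X, (∀ β < α, g β = F β) ∧ P g α x :=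
    wellFounded_lt.fix_eq _ α
  obtain ⟨x, hx⟩ := step F α ih
  have hex : ∃ x, ∃ g : ι → X, (∀ β < α, g β = F β) ∧ P g α x := ⟨x, F, fun _ _ => rfl, hx⟩
  obtain ⟨g, hg, hgα⟩ := hF ▸ Classical.epsilon_spec hex
  exact hP g F α _ hg hgα

namespace HausdorffGap

section AlmostEq

variable {X : Type*} {s t u : Set X}

def AlmostEq (s t : Set X) : Prop := (symmDiff s t).Finite

namespace AlmostEq

theorem symm (h : AlmostEq s t) : AlmostEq t s := by rwa [AlmostEq, symmDiff_comm]

theorem trans (h₁ : AlmostEq s t) (h₂ : AlmostEq t u) : AlmostEq s u :=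
  (h₁.union h₂).subset (symmDiff_triangle s t u)

instance : @Trans (Set X) (Set X) (Set X) AlmostEq AlmostEq AlmostEq := ⟨trans⟩

theorem inter_right (h : AlmostEq s t) (u : Set X) : AlmostEq (s ∩ u) (t ∩ u) := by
  rw [AlmostEq, ← inter_symmDiff_distrib_right]
  exact h.subset inter_subset_left

theorem diff_finite (h : AlmostEq s t) : (s \ t).Finite := h.subset fun _ hx => Or.inl hx

theorem diff_finite' (h : AlmostEq s t) : (t \ s).Finite := h.subset fun _ hx => Or.inr hx

end AlmostEq

theorem almostEq_of_finite_diff (h₁ : (s \ t).Finite) (h₂ : (t \ s).Finite) : AlmostEq s t :=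
  h₁.union h₂

theorem almostEq_inter_of_finite_diff (h : (s \ t).Finite) : AlmostEq (s ∩ t) s :=
  almostEq_of_finite_diff (finite_empty.subset fun _ hx => hx.2 hx.1.1)
    (by rwa [sdiff_self_inter])

end AlmostEq

theorem exists_infinite_subset_forall_inter_finite {t : Set ℕ} {c : ℕ → Set ℕ}
    (h : ∀ k, (t \ ⋃ j ≤ k, c j).Infinite) :
    ∃ e ⊆ t, e.Infinite ∧ ∀ k, (e ∩ c k).Finite := by
  choose y hy hky using fun k => (h k).exists_gt k
  refine ⟨range y, range_subset_iff.mpr fun k => (hy k).1, ?_, fun k => ?_⟩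
  · exact infinite_of_not_bddAbove fun ⟨N, hN⟩ => (hky N).not_ge (hN ⟨N, rfl⟩)
  · refine ((finite_Iio k).image y).subset ?_
    rintro _ ⟨⟨j, rfl⟩, hj⟩
    refine ⟨j, mem_Iio.mpr <| lt_of_not_ge fun hkj => (hy j).2 ?_, rfl⟩
    exact mem_iUnion₂.mpr ⟨k, hkj, hj⟩

theorem exists_cutoffs {a b : ℕ → Set ℕ} (h : ∀ j k, j < k → ((b k ∩ a j) \ b j).Finite)
    (L : ℕ → ℕ) : ∃ m : ℕ → ℕ, Monotone m ∧ (∀ k, L k ≤ m k) ∧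
      ∀ j k, j < k → ∀ x ∈ b k ∩ a j, m k ≤ x → x ∈ b j := by
  choose B hB using fun k => ((finite_Iio k).biUnion fun j hj => h j k hj).exists_subset_Iio
  set M : ℕ → ℕ := fun i => max (L i) (B i)
  have hM : ∀ k, M k ≤ (Finset.range (k + 1)).sup M := fun k => Finset.le_sup (by simp)
  refine ⟨fun k => (Finset.range (k + 1)).sup M,
    fun i j hij => Finset.sup_mono (Finset.range_subset_range.mpr (by omega)),
    fun k => (le_max_left _ _).trans (hM k), fun j k hjk x hx hmx => ?_⟩
  by_contra hxb
  exact (mem_Iio.mp (hB k (mem_biUnion hjk ⟨hx, hxb⟩))).not_ge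
    (((le_max_right (L k) (B k)).trans (hM k)).trans hmx)

def diagonalUnion (b : ℕ → Set ℕ) (m : ℕ → ℕ) : Set ℕ := ⋃ k, b k \ Iio (m k)

section diagonalUnion

variable {a b : ℕ → Set ℕ} {m : ℕ → ℕ} {e t : Set ℕ}

theorem union_diagonalUnion_inter_diff_subset
    (hcut : ∀ j k, j < k → ∀ x ∈ b k ∩ a j, m k ≤ x → x ∈ b j) (k : ℕ) :
    ((e ∪ diagonalUnion b m ∩ t) ∩ a k) \ b k ⊆ e ∩ a k ∪ ⋃ i ≤ k, b i \ b k := by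
  rintro x ⟨⟨hxe | ⟨hx, -⟩, hxa⟩, hxb⟩
  · exact Or.inl ⟨hxe, hxa⟩
  obtain ⟨i, hxi, hmi⟩ := mem_iUnion.mp hx
  rcases le_or_gt i k with hik | hki
  · exact Or.inr (mem_iUnion₂.mpr ⟨i, hik, hxi, hxb⟩)
  · exact absurd (hcut k i hki x ⟨hxi, hxa⟩ (not_lt.mp hmi)) hxb

theorem diff_union_diagonalUnion_inter_subset (hba : ∀ k, b k ⊆ a k) (k : ℕ) :
    b k \ ((e ∪ diagonalUnion b m ∩ t) ∩ a k) ⊆ Iio (m k) ∪ (a k \ t) := by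
  rintro x ⟨hxb, hx⟩
  by_cases hxt : x ∈ t
  · refine Or.inl (mem_Iio.mpr (lt_of_not_ge fun hmx => hx ⟨Or.inr ⟨?_, hxt⟩, hba k hxb⟩))
    exact mem_iUnion.mpr ⟨k, hxb, not_lt.mpr hmx⟩
  · exact Or.inr ⟨hba k hxb, hxt⟩

theorem almostEq_union_diagonalUnion_inter (hba : ∀ k, b k ⊆ a k)
    (hcut : ∀ j k, j < k → ∀ x ∈ b k ∩ a j, m k ≤ x → x ∈ b j) {k : ℕ}
    (hdiff : ∀ i ≤ k, (b i \ b k).Finite) (he : (e ∩ a k).Finite) (ht : (a k \ t).Finite) :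
    AlmostEq ((e ∪ diagonalUnion b m ∩ t) ∩ a k) (b k) :=
  almostEq_of_finite_diff
    ((he.union ((finite_Iic k).biUnion hdiff)).subset (union_diagonalUnion_inter_diff_subset hcut k))
    (((finite_Iio _).union ht).subset (diff_union_diagonalUnion_inter_subset hba k))

theorem mem_biUnion_of_mem_diagonalUnion (hba : ∀ k, b k ⊆ a k) (hm : Monotone m) {x k : ℕ}
    (hx : x ∈ diagonalUnion b m) (hxk : x < m k) : x ∈ ⋃ j < k, a j := by
  obtain ⟨j, hxj, hmj⟩ := mem_iUnion.mp hx
  exact mem_iUnion₂.mpr ⟨j, lt_of_not_ge fun hkj => hmj (hxk.trans_le (hm hkj)), hba j hxj⟩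

end diagonalUnion

section Tower

variable {ι : Type*} [LinearOrder ι] {a b : ι → Set ℕ} {α ξ η : ι}

def IsTower (a : ι → Set ℕ) : Prop :=
  ∀ ξ η, ξ < η → (a ξ \ a η).Finite ∧ (a η \ a ξ).Infinite

theorem IsTower.diff_finite (ha : IsTower a) (h : ξ ≤ η) : (a ξ \ a η).Finite := by
  rcases h.lt_or_eq with h | rfl
  · exact (ha ξ η h).1
  · simp

theorem IsTower.exists_infinite_subset_inter_finite (ha : IsTower a) {γ : ℕ → ι}
    (hγ : Monotone γ) (hγα : ∀ k, γ k < α) (hcof : ∀ ξ < α, ∃ k, ξ ≤ γ k) :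
    ∃ e ⊆ a α, e.Infinite ∧ ∀ ξ < α, (e ∩ a ξ).Finite := by
  obtain ⟨e, heα, he, hea⟩ := exists_infinite_subset_forall_inter_finite (t := a α)
    (c := fun k => a (γ k)) fun k => by
      refine ((ha _ _ (hγα k)).2.sdiff ((finite_Iic k).biUnion fun j hj =>
        ha.diff_finite (hγ hj))).mono ?_
      rintro x ⟨⟨hxα, hxk⟩, hx⟩
      refine ⟨hxα, fun hxj => ?_⟩
      obtain ⟨j, hj, hxj⟩ := mem_iUnion₂.mp hxj
      exact hx (mem_biUnion hj ⟨hxj, hxk⟩)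
  refine ⟨e, heα, he, fun ξ hξ => ?_⟩
  obtain ⟨k, hk⟩ := hcof ξ hξ
  refine ((hea k).union (ha.diff_finite hk)).subset fun x ⟨hxe, hxξ⟩ => ?_
  by_cases hxk : x ∈ a (γ k)
  · exact Or.inl ⟨hxe, hxk⟩
  · exact Or.inr ⟨hxξ, hxk⟩

def hausdorffSet (a b : ι → Set ℕ) (α : ι) (s : Set ℕ) (n : ℕ) : Set ι :=
  {ξ | ξ < α ∧ (b ξ ∩ a α) \ s ⊆ Iio n}

/-- The recursion invariant for `s = b α`. Hausdorff's condition `finite_hausdorffSet` is what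
rules out a trivialization; `infinite_diff` supplies the points that keep it alive at later
stages. -/
structure Admissible (a b : ι → Set ℕ) (α : ι) (s : Set ℕ) : Prop where
  subset : s ⊆ a α
  infinite_diff : ∀ F : Set ι, F.Finite → F ⊆ Iio α → (s \ ⋃ η ∈ F, a η).Infinite
  almostEq : ∀ ξ < α, AlmostEq (s ∩ a ξ) (b ξ)
  finite_hausdorffSet : ∀ n, (hausdorffSet a b α s n).Finite

theorem Admissible.congr {b' : ι → Set ℕ} {s : Set ℕ} (h : ∀ ξ < α, b ξ = b' ξ)
    (hs : Admissible a b α s) : Admissible a b' α s where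
  subset := hs.subset
  infinite_diff := hs.infinite_diff
  almostEq ξ hξ := h ξ hξ ▸ hs.almostEq ξ hξ
  finite_hausdorffSet n :=
    (hs.finite_hausdorffSet n).subset fun ξ ⟨hξ, hgap⟩ => ⟨hξ, h ξ hξ ▸ hgap⟩

theorem Admissible.almostEq_of_le (hη : Admissible a b η (b η)) (hξ : b ξ ⊆ a ξ) (h : ξ ≤ η) :
    AlmostEq (b η ∩ a ξ) (b ξ) := by
  rcases h.lt_or_eq with h | rfl
  · exact hη.almostEq ξ h
  · rw [inter_eq_left.mpr hξ]
    simp [AlmostEq]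

theorem Admissible.finite_setOf_le (hη : Admissible a b η (b η)) (n : ℕ) :
    {ξ | ξ ≤ η ∧ (b ξ ∩ a η) \ b η ⊆ Iio n}.Finite :=
  ((hη.finite_hausdorffSet n).insert η).subset fun _ ⟨hξ, hgap⟩ =>
    hξ.eq_or_lt.imp id fun h => ⟨h, hgap⟩

theorem Admissible.exists_mem_diff (ha : IsTower a) (hξ : Admissible a b ξ (b ξ)) (hξα : ξ < α)
    {e : Set ℕ} (he : (e ∩ a ξ).Finite) {γ : ℕ → ι} {k : ℕ} (hk : ∀ j < k, γ j < ξ) :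
    ∃ w ∈ (b ξ ∩ a α) \ (e ∪ ⋃ j < k, a (γ j)), k ≤ w := by
  have hfresh := hξ.infinite_diff (γ '' Iio k) ((finite_Iio k).image γ)
    (by rintro _ ⟨j, hj, rfl⟩; exact hk j hj)
  rw [biUnion_image] at hfresh
  obtain ⟨w, ⟨⟨hwb, hwk⟩, hwZ⟩, hkw⟩ :=
    (hfresh.sdiff ((ha.diff_finite hξα.le).union he)).exists_gt k
  refine ⟨w, ⟨⟨hwb, ?_⟩, ?_⟩, hkw.le⟩
  · by_contra h
    exact hwZ (Or.inl ⟨hξ.subset hwb, h⟩)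
  · rintro (hwe | hwa)
    · exact hwZ (Or.inr ⟨hwe, hξ.subset hwb⟩)
    · exact hwk hwa

theorem exists_witness_bound (ha : IsTower a) (hb : ∀ β < α, Admissible a b β (b β))
    {e : Set ℕ} (hea : ∀ ξ < α, (e ∩ a ξ).Finite) {γ : ℕ → ι} {S : Set ι} (hS : S.Finite)
    (k : ℕ) : ∃ L, ∀ ξ ∈ S, ξ < α → (∀ j < k, γ j < ξ) →
      ∃ w < L, w ∈ (b ξ ∩ a α) \ (e ∪ ⋃ j < k, a (γ j)) ∧ k ≤ w := by
  have hex : ∀ ξ, ∃ w, ξ < α → (∀ j < k, γ j < ξ) →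
      w ∈ (b ξ ∩ a α) \ (e ∪ ⋃ j < k, a (γ j)) ∧ k ≤ w := by
    intro ξ
    by_cases h : ξ < α ∧ ∀ j < k, γ j < ξ
    · obtain ⟨w, hw, hkw⟩ := (hb ξ h.1).exists_mem_diff ha h.1 (hea ξ h.1) h.2
      exact ⟨w, fun _ _ => ⟨hw, hkw⟩⟩
    · exact ⟨0, fun h₁ h₂ => absurd ⟨h₁, h₂⟩ h⟩
  choose w hw using hex
  obtain ⟨L, hL⟩ := (hS.image w).exists_subset_Iio
  exact ⟨L, fun ξ hξ h₁ h₂ => ⟨w ξ, hL (mem_image_of_mem w hξ), hw ξ h₁ h₂⟩⟩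

theorem almostEq_of_cofinal (hb : ∀ β < α, Admissible a b β (b β)) (ha : IsTower a)
    {γ : ℕ → ι} (hγα : ∀ k, γ k < α) (hcof : ∀ ξ < α, ∃ k, ξ ≤ γ k) {s : Set ℕ}
    (hs : ∀ k, AlmostEq (s ∩ a (γ k)) (b (γ k))) (hξ : ξ < α) : AlmostEq (s ∩ a ξ) (b ξ) := by
  obtain ⟨k, hk⟩ := hcof ξ hξ
  calc AlmostEq (s ∩ a ξ) (s ∩ a (γ k) ∩ a ξ) := by
        rw [inter_right_comm]
        exact (almostEq_inter_of_finite_diff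
          ((ha.diff_finite hk).subset (sdiff_subset_sdiff_left inter_subset_right))).symm
    AlmostEq _ (b (γ k) ∩ a ξ) := (hs k).inter_right _
    AlmostEq _ (b ξ) := (hb _ (hγα k)).almostEq_of_le (hb ξ hξ).subset hk

/-- Sort `ξ` by the first `k` with `ξ ≤ γ k`: for `k < n` Hausdorff's condition at `γ k` leaves
finitely many `ξ`, and for `k ≥ n` the witness `w ≥ k` shows that `ξ` is not in the set. -/
theorem finite_hausdorffSet_of_cofinal {γ : ℕ → ι} {B : ℕ → ℕ} {s : Set ℕ}
    (hcof : ∀ ξ < α, ∃ k, ξ ≤ γ k)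
    (hR : ∀ k n, {ξ | ξ ≤ γ k ∧ (b ξ ∩ a (γ k)) \ b (γ k) ⊆ Iio n}.Finite)
    (hB : ∀ k, (s ∩ a (γ k)) \ b (γ k) ∪ (a (γ k) \ a α) ⊆ Iio (B k))
    (hw : ∀ k, ∀ ξ < α, (∀ j < k, γ j < ξ) → ξ ≤ γ k →
      (b ξ ∩ a (γ k)) \ b (γ k) ⊆ Iio (max k (B k)) → ∃ w ∈ (b ξ ∩ a α) \ s, k ≤ w)
    (n : ℕ) : (hausdorffSet a b α s n).Finite := by
  refine ((finite_Iio n).biUnion fun k _ => hR k (max n (B k))).subset ?_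
  rintro ξ ⟨hξα, hξn⟩
  have hex : ∃ k, ξ ≤ γ k := hcof ξ hξα
  set k := Nat.find hex
  have hgap : (b ξ ∩ a (γ k)) \ b (γ k) ⊆ Iio (max n (B k)) := by
    rintro x ⟨⟨hxb, hxa⟩, hxb'⟩
    by_cases hxα : x ∈ a α
    · by_cases hxs : x ∈ s
      · exact Iio_subset_Iio (le_max_right _ _) (hB _ (Or.inl ⟨⟨hxs, hxa⟩, hxb'⟩))
      · exact Iio_subset_Iio (le_max_left _ _) (hξn ⟨⟨hxb, hxα⟩, hxs⟩)
    · exact Iio_subset_Iio (le_max_right _ _) (hB _ (Or.inr ⟨hxa, hxα⟩))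
  refine mem_biUnion (mem_Iio.mpr <| lt_of_not_ge fun hnk => ?_) ⟨Nat.find_spec hex, hgap⟩
  obtain ⟨w, hw, hkw⟩ := hw k ξ hξα (fun j hj => lt_of_not_ge (Nat.find_min hex hj))
    (Nat.find_spec hex) (hgap.trans (Iio_subset_Iio (max_le_max hnk le_rfl)))
  exact (hξn hw).not_ge (hnk.trans hkw)

theorem exists_admissible_of_cofinal (ha : IsTower a) (hb : ∀ β < α, Admissible a b β (b β))
    {γ : ℕ → ι} (hγ : Monotone γ) (hγα : ∀ k, γ k < α) (hcof : ∀ ξ < α, ∃ k, ξ ≤ γ k) :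
    ∃ s, Admissible a b α s := by
  have hbγ : ∀ k, Admissible a b (γ k) (b (γ k)) := fun k => hb _ (hγα k)
  have hcoh : ∀ j k, j ≤ k → AlmostEq (b (γ k) ∩ a (γ j)) (b (γ j)) := fun j k h =>
    (hbγ k).almostEq_of_le (hbγ j).subset (hγ h)
  have hdiff : ∀ j k, j ≤ k → (b (γ j) \ b (γ k)).Finite := fun j k h =>
    (hcoh j k h).diff_finite'.subset (sdiff_subset_sdiff_right inter_subset_left)
  obtain ⟨e, heα, he, hea⟩ := ha.exists_infinite_subset_inter_finite hγ hγα hcof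
  choose B hB using fun k => (((hea _ (hγα k)).union ((finite_Iic k).biUnion fun i hi =>
    hdiff i k hi)).union (ha.diff_finite (hγα k).le)).exists_subset_Iio
  choose L hL using fun k =>
    exists_witness_bound (γ := γ) ha hb hea ((hbγ k).finite_setOf_le (max k (B k))) k
  obtain ⟨m, hm, hLm, hcut⟩ := exists_cutoffs (fun j k h => (hcoh j k h.le).diff_finite) L
  have hba : ∀ k, b (γ k) ⊆ a (γ k) := fun k => (hbγ k).subset
  set D := diagonalUnion (fun k => b (γ k)) m
  refine ⟨e ∪ D ∩ a α, union_subset heα inter_subset_right, fun F hF hFα => ?_,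
    fun ξ => almostEq_of_cofinal hb ha hγα hcof fun k => ?_,
    finite_hausdorffSet_of_cofinal (B := B) hcof (fun k => (hbγ k).finite_setOf_le)
      (fun k => ?_) fun k ξ hξα hk hξk hξgap => ?_⟩
  · exact (he.diff_biUnion hF fun η hη => hea η (hFα hη)).mono
      (sdiff_subset_sdiff_left subset_union_left)
  · exact almostEq_union_diagonalUnion_inter hba hcut (fun i hi => hdiff i k hi)
      (hea _ (hγα k)) (ha.diff_finite (hγα k).le)
  · exact (union_subset_union_left _ (union_diagonalUnion_inter_diff_subset hcut k)).trans (hB k)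
  · obtain ⟨w, hwL, ⟨hwα, hws⟩, hkw⟩ := hL k ξ ⟨hξk, hξgap⟩ hξα hk
    refine ⟨w, ⟨hwα, ?_⟩, hkw⟩
    rintro (hwe | ⟨hwD, -⟩)
    · exact hws (Or.inl hwe)
    · exact hws (Or.inr (mem_biUnion_of_mem_diagonalUnion hba hm hwD (hwL.trans_le (hLm k))))

theorem exists_admissible (ha : IsTower a) (hinf : ∀ ξ, (a ξ).Infinite)
    (hα : (Iio α).Countable) (hb : ∀ β < α, Admissible a b β (b β)) :
    ∃ s, Admissible a b α s := by
  rcases (Iio α).eq_empty_or_nonempty with hmin | hne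
  · have hlt : ∀ ξ, ¬ ξ < α := fun ξ hξ => (hmin ▸ hξ : ξ ∈ (∅ : Set ι))
    refine ⟨a α, subset_rfl, fun F _ hFα => ?_, fun ξ hξ => absurd hξ (hlt ξ),
      fun n => finite_empty.subset fun ξ hξ => hlt ξ hξ.1⟩
    have hF : F = ∅ := subset_empty_iff.mp (hmin ▸ hFα)
    rw [hF]
    simpa using hinf α
  · obtain ⟨γ, hγ, hγα, hcof⟩ := exists_monotone_cofinal_of_countable_Iio hα hne
    exact exists_admissible_of_cofinal ha hb hγ hγα hcof

theorem exists_admissible_family [WellFoundedLT ι] (ha : IsTower a)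
    (hinf : ∀ ξ, (a ξ).Infinite) (hcount : ∀ α : ι, (Iio α).Countable) :
    ∃ b : ι → Set ℕ, ∀ α, Admissible a b α (b α) :=
  WellFoundedLT.exists_forall_of_step (Admissible a) (fun _ _ _ _ h hs => hs.congr h)
    fun _ α hb => exists_admissible ha hinf (hcount α) hb

theorem not_exists_almostEq [Uncountable ι] (hH : ∀ α n, (hausdorffSet a b α (b α) n).Finite) :
    ¬ ∃ c : Set ℕ, ∀ α, AlmostEq (c ∩ a α) (b α) := by
  rintro ⟨c, hc⟩
  choose N hN using fun α => (hc α).exists_subset_Iio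
  obtain ⟨n, hn⟩ : ∃ n, ¬ (N ⁻¹' {n}).Countable := by
    by_contra! h
    exact not_countable_univ ((countable_iUnion h).mono fun α _ => mem_iUnion.mpr ⟨N α, rfl⟩)
  obtain ⟨α, hα : N α = n, hinf⟩ : ∃ α ∈ N ⁻¹' {n}, (N ⁻¹' {n} ∩ Iio α).Infinite := by
    by_contra! h
    exact hn (Countable.of_finite_inter_Iio h)
  refine hinf ((hH α n).subset ?_)
  rintro ξ ⟨hξ : N ξ = n, hξα⟩
  refine ⟨hξα, fun x ⟨⟨hxb, hxa⟩, hxb'⟩ => ?_⟩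
  by_cases hxc : x ∈ c
  · exact hα ▸ hN α (Or.inl ⟨⟨hxc, hxa⟩, hxb'⟩)
  · exact hξ ▸ hN ξ (Or.inr ⟨hxb, fun h => hxc h.1⟩)

end Tower

end HausdorffGap

theorem exists_hausdorff_gap_family
    (a : Omega1 → Set ℕ)
    (hinf : ∀ ξ, (a ξ).Infinite)
    (htower : ∀ ξ η : Omega1, ξ < η → (a ξ \ a η).Finite ∧ (a η \ a ξ).Infinite) :
    ∃ b : Omega1 → Set ℕ,
      (∀ α, b α ⊆ a α) ∧
      (∀ α β : Omega1, α < β → (symmDiff (b β ∩ a α) (b α)).Finite) ∧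
      ¬ ∃ c : Set ℕ, ∀ α : Omega1, (symmDiff (c ∩ a α) (b α)).Finite := by
  obtain ⟨b, hb⟩ := HausdorffGap.exists_admissible_family htower hinf Omega1.countable_Iio
  exact ⟨b, fun α => (hb α).subset, fun α β h => (hb β).almostEq α h,
    HausdorffGap.not_exists_almostEq fun α => (hb α).finite_hausdorffSet⟩
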